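/- arXiv:0907.1820 — 2 statements merged into one kernel-verified Lean document; each statement's English description precedes it below -/
import Mathlib

section
/- Let G be the group presented with two generators p, γ and the relations p⁹ = 1 and γ⁻¹pγ = p⁴. Then G is isomorphic to the semidirect product (ℤ/9) ⋊ ℤ, where the generator 1 ∈ ℤ acts on ℤ/9 by multiplication by 4 (an automorphism of ℤ/9, since 4 is a unit modulo 9). -/
/-!
Send `p ↦ (1, 0)` and `γ ↦ (0, -1)`: the relation `γ⁻¹ p γ = p⁴` says that conjugation by `γ⁻¹`
multiplies the exponent of `p` by `4`, which is the action of `1 ∈ ℤ`. Conversely, `p⁹ = 1` makes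
`x ↦ pˣ` a homomorphism from `ℤ/9`, and together with `n ↦ γ⁻ⁿ` it lifts to the semidirect product,
since compatibility with the action only has to be checked on the generator `1 ∈ ℤ` and on `1 ∈ ℤ/9`.
Both composites fix the generators.
-/

namespace ClassicalZariski.Stmt3

/-- `p` in the free group on the two generators `p, γ`. -/
def p : FreeGroup (Fin 2) := FreeGroup.of 0

/-- `γ` in the free group on the two generators. -/
def g : FreeGroup (Fin 2) := FreeGroup.of 1

/-- The relations `p⁹ = 1` and `γ⁻¹ p γ = p⁴`. -/
def rels : Set (FreeGroup (Fin 2)) :=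
  { p ^ 9, (g⁻¹ * p * g) * (p ^ 4)⁻¹ }

/-- The group `G` presented by generators `p, γ` and relations `p⁹ = 1`, `γ⁻¹ p γ = p⁴`. -/
def G : Type := PresentedGroup rels

instance : Group G := by unfold G; infer_instance

/-- Multiplication by the unit `4` as an additive automorphism of `ℤ/9`. -/
def mul4 : AddAut (ZMod 9) :=
  DistribMulAction.toAddAut (ZMod 9)ˣ (ZMod 9) (ZMod.unitOfCoprime 4 (by norm_num))

/-- The same automorphism, viewed as a multiplicative automorphism of
`Multiplicative (ZMod 9)`. -/
def mul4' : MulAut (Multiplicative (ZMod 9)) := AddEquiv.toMultiplicative mul4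

/-- The action of `ℤ` on `ℤ/9` in which `1 ∈ ℤ` acts by multiplication by `4`. -/
def act : Multiplicative ℤ →* MulAut (Multiplicative (ZMod 9)) :=
  zpowersHom _ mul4'

open Multiplicative SemidirectProduct

local notation "SD" => Multiplicative (ZMod 9) ⋊[act] Multiplicative ℤ

section Intertwining

variable {N K H : Type*} [Group N] [Group K] [Group H]

theorem intertwines_of_closure_eq_top {φ : K →* MulAut N} {f₁ : N →* H} {f₂ : K →* H}
    {s : Set K} (hs : Subgroup.closure s = ⊤)
    (h : ∀ k ∈ s, f₁.comp (φ k).toMonoidHom = (MulAut.conj (f₂ k)).toMonoidHom.comp f₁)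
    (k : K) : f₁.comp (φ k).toMonoidHom = (MulAut.conj (f₂ k)).toMonoidHom.comp f₁ := by
  have hk : k ∈ Subgroup.closure s := hs ▸ Subgroup.mem_top k
  simp only [MonoidHom.ext_iff, MonoidHom.comp_apply, MulEquiv.coe_toMonoidHom,
    MulAut.conj_apply] at h ⊢
  induction hk using Subgroup.closure_induction with
  | mem k hk => exact h k hk
  | one => simp
  | mul a b _ _ ha hb => intro n; simp [ha, hb, mul_assoc]
  | inv a _ ha =>
    intro n
    have := ha (φ a⁻¹ n)
    rw [← MulAut.mul_apply, ← map_mul, mul_inv_cancel, map_one, MulAut.one_apply] at this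
    simp [this, mul_assoc]

end Intertwining

theorem closure_ofAdd_one_eq_top :
    Subgroup.closure ({ofAdd (1 : ℤ)} : Set (Multiplicative ℤ)) = ⊤ :=
  eq_top_iff.mpr fun k _ => Subgroup.mem_closure_singleton.mpr
    ⟨toAdd k, by rw [← ofAdd_zsmul, zsmul_one, Int.cast_id, ofAdd_toAdd]⟩

section ZModHom

variable {H : Type*} [Group H] {n : ℕ}

def zmodPowHom (x : H) (hx : x ^ n = 1) : Multiplicative (ZMod n) →* H :=
  AddMonoidHom.toMultiplicativeLeft <| ZMod.lift n
    ⟨zmultiplesHom (Additive H) (Additive.ofMul x), by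
      rw [zmultiplesHom_apply, natCast_zsmul, ← ofMul_pow, hx, ofMul_one]⟩

theorem zmodPowHom_ofAdd_intCast (x : H) (hx : x ^ n = 1) (k : ℤ) :
    zmodPowHom x hx (ofAdd (k : ZMod n)) = x ^ k := by
  simp [zmodPowHom]

@[simp]
theorem zmodPowHom_ofAdd_one (x : H) (hx : x ^ n = 1) : zmodPowHom x hx (ofAdd 1) = x := by
  simpa using zmodPowHom_ofAdd_intCast x hx 1

theorem zmod_monoidHom_ext {f f' : Multiplicative (ZMod n) →* H}
    (h : f (ofAdd 1) = f' (ofAdd 1)) : f = f' := by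
  refine MonoidHom.ext fun x => ?_
  obtain ⟨k, hk⟩ := ZMod.intCast_surjective (toAdd x)
  have hx : ofAdd 1 ^ k = x := by rw [← ofAdd_zsmul, zsmul_one, hk, ofAdd_toAdd]
  rw [← hx, map_zpow, map_zpow, h]

end ZModHom

theorem rels_lift_eq_one {H : Type*} [Group H] {a b : H} (ha : a ^ 9 = 1)
    (hb : b⁻¹ * a * b = a ^ 4) : ∀ r ∈ rels, FreeGroup.lift ![a, b] r = 1 := by
  rintro r (rfl | rfl) <;> simp [p, g, ha, hb]

def P : PresentedGroup rels := PresentedGroup.of 0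

def Γ : PresentedGroup rels := PresentedGroup.of 1

theorem P_pow_nine : P ^ 9 = 1 := by
  simpa [P, PresentedGroup.of, p] using
    PresentedGroup.one_of_mem (rels := rels) (Set.mem_insert _ _)

theorem Γ_inv_mul_P_mul_Γ : Γ⁻¹ * P * Γ = P ^ 4 := by
  simpa [P, Γ, PresentedGroup.of, p, g, mul_inv_eq_one] using
    PresentedGroup.one_of_mem (rels := rels) (Set.mem_insert_of_mem _ rfl)

theorem act_ofAdd_one (x : ZMod 9) : act (ofAdd 1) (ofAdd x) = ofAdd (4 * x) := by
  simp [act, mul4', mul4, Units.smul_def]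

theorem inl_pow_nine : (inl (ofAdd 1) : SD) ^ 9 = 1 := by
  rw [← map_pow, ← ofAdd_nsmul, show (9 • 1 : ZMod 9) = 0 from rfl, ofAdd_zero, map_one]

theorem inr_mul_inl_mul_inr_inv :
    (inr (ofAdd 1) * inl (ofAdd 1) * (inr (ofAdd 1))⁻¹ : SD) = inl (ofAdd 1) ^ 4 := by
  rw [← map_inv, ← inl_aut, act_ofAdd_one, ← map_pow, ← ofAdd_nsmul]
  simp

def toSemidirect : PresentedGroup rels →* SD :=
  PresentedGroup.toGroup <|
    rels_lift_eq_one inl_pow_nine (by rw [inv_inv]; exact inr_mul_inl_mul_inr_inv)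

theorem zmodPowHom_P_intertwines (k : Multiplicative ℤ) :
    (zmodPowHom P P_pow_nine).comp (act k).toMonoidHom =
      (MulAut.conj (zpowersHom _ Γ⁻¹ k)).toMonoidHom.comp (zmodPowHom P P_pow_nine) := by
  refine intertwines_of_closure_eq_top closure_ofAdd_one_eq_top ?_ k
  rintro _ rfl
  refine zmod_monoidHom_ext ?_
  simpa [act_ofAdd_one, ← Γ_inv_mul_P_mul_Γ] using zmodPowHom_ofAdd_intCast P P_pow_nine 4

def ofSemidirect : SD →* PresentedGroup rels :=
  lift (zmodPowHom P P_pow_nine) (zpowersHom _ Γ⁻¹) zmodPowHom_P_intertwines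

def mulEquivSemidirect : PresentedGroup rels ≃* SD :=
  MonoidHom.toMulEquiv toSemidirect ofSemidirect
    (PresentedGroup.ext fun i => by fin_cases i <;> simp [toSemidirect, ofSemidirect, P, Γ])
    (hom_ext (zmod_monoidHom_ext (by simp [toSemidirect, ofSemidirect, P]))
      (MonoidHom.ext_mint (by simp [toSemidirect, ofSemidirect, Γ])))

theorem iso_semidirect :
    (∀ x : ZMod 9,
        act (Multiplicative.ofAdd (1 : ℤ)) (Multiplicative.ofAdd x) =
          Multiplicative.ofAdd (4 * x)) ∧
    Nonempty (G ≃* Multiplicative (ZMod 9) ⋊[act] Multiplicative ℤ) :=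
  ⟨act_ofAdd_one, ⟨mulEquivSemidirect⟩⟩

end ClassicalZariski.Stmt3
end

section
/- In the polynomial ring ℂ[x,y,z], there exist homogeneous polynomials f₂ of degree 2 and f₃ of degree 3 such that (y³ + y²z + x²z)·(y³ + y²z + x²z − (4/27)z³) = f₂³ + f₃². Explicitly, one may take f₃ = y³ + y²z + x²z − (2/27)z³ and f₂ = c·z² for any c ∈ ℂ with c³ = −4/729. -/
namespace ClassicalZariski.Stmt11

open MvPolynomial

/-- The variable `x`. -/
noncomputable def Xv : MvPolynomial (Fin 3) ℂ := X 0

/-- The variable `y`. -/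
noncomputable def Yv : MvPolynomial (Fin 3) ℂ := X 1

/-- The variable `z`. -/
noncomputable def Zv : MvPolynomial (Fin 3) ℂ := X 2

/-- The sextic `(y³ + y²z + x²z)·(y³ + y²z + x²z − (4/27)z³)`. -/
noncomputable def sextic : MvPolynomial (Fin 3) ℂ :=
  (Yv ^ 3 + Yv ^ 2 * Zv + Xv ^ 2 * Zv) *
    (Yv ^ 3 + Yv ^ 2 * Zv + Xv ^ 2 * Zv - C (4 / 27) * Zv ^ 3)

lemma key : ∀ c : ℂ, c ^ 3 = -4 / 729 →
      (C c * Zv ^ 2).IsHomogeneous 2 ∧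
      (Yv ^ 3 + Yv ^ 2 * Zv + Xv ^ 2 * Zv - C (2 / 27) * Zv ^ 3).IsHomogeneous 3 ∧
      sextic = (C c * Zv ^ 2) ^ 3 +
        (Yv ^ 3 + Yv ^ 2 * Zv + Xv ^ 2 * Zv - C (2 / 27) * Zv ^ 3) ^ 2 := by
  intro c hc
  have hZ : (Zv).IsHomogeneous 1 := isHomogeneous_X _ _
  have hY : (Yv).IsHomogeneous 1 := isHomogeneous_X _ _
  have hX : (Xv).IsHomogeneous 1 := isHomogeneous_X _ _
  refine ⟨?_, ?_, ?_⟩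
  · simpa using (isHomogeneous_C _ c).mul (hZ.pow 2)
  · refine (((hY.pow 3).add ((hY.pow 2).mul hZ)).add ((hX.pow 2).mul hZ)).sub ?_
    simpa using (isHomogeneous_C _ (2/27 : ℂ)).mul (hZ.pow 3)
  · have hc' : (C c : MvPolynomial (Fin 3) ℂ)^3 = C (-4/729) := by
      rw [← map_pow, hc]
    have h1 : (C (4/27) : MvPolynomial (Fin 3) ℂ) = C (2/27) + C (2/27) := by
      rw [← map_add]; norm_num
    have h2 : (C (2/27) : MvPolynomial (Fin 3) ℂ) * C (2/27) = - C (-4/729 : ℂ) := by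
      rw [← map_mul, ← map_neg]; norm_num
    rw [sextic]
    linear_combination (-(Yv^3+Yv^2*Zv+Xv^2*Zv)*Zv^3) * h1 - Zv^6 * hc' - Zv^6 * h2

theorem torus_structure :
    (∃ f₂ f₃ : MvPolynomial (Fin 3) ℂ,
      f₂.IsHomogeneous 2 ∧ f₃.IsHomogeneous 3 ∧ sextic = f₂ ^ 3 + f₃ ^ 2) ∧
    ∀ c : ℂ, c ^ 3 = -4 / 729 →
      (C c * Zv ^ 2).IsHomogeneous 2 ∧
      (Yv ^ 3 + Yv ^ 2 * Zv + Xv ^ 2 * Zv - C (2 / 27) * Zv ^ 3).IsHomogeneous 3 ∧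
      sextic = (C c * Zv ^ 2) ^ 3 +
        (Yv ^ 3 + Yv ^ 2 * Zv + Xv ^ 2 * Zv - C (2 / 27) * Zv ^ 3) ^ 2 := by
  refine ⟨?_, key⟩
  obtain ⟨c, hc⟩ := IsAlgClosed.exists_pow_nat_eq (-4/729 : ℂ) (n := 3) (by norm_num)
  obtain ⟨h2, h3, heq⟩ := key c hc
  exact ⟨_, _, h2, h3, heq⟩

end ClassicalZariski.Stmt11
end
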